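/- Let ρ ≥ 5/log 5, N = N_ρ, and x₁ > x₂ as in the superchampion setup, with B₁ = min(x₂² − 2x₂, x₁/2 − √x₁) > 0. If M is a positive integer with ben(M) < B₁, then v_p(M) ≤ 1 for every prime p ≥ √x₁. -/

import Mathlib

/-- ℓ(M): the sum of the prime powers in the standard factorization of M. -/
def ell (M : ℕ) : ℕ := ∑ p ∈ M.primeFactors, p ^ M.factorization p

/-- The benefit of M with respect to the superchampion N associated to ρ. -/
noncomputable def ben (ρ : ℝ) (N M : ℕ) : ℝ :=
  (ell M : ℝ) - (ell N : ℝ) - ρ * (Real.log M - Real.log N)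

/-!
Write `F_p(n) = ℓ(pⁿ) - ρ n log p` (`primePowerCost ρ p n`), so that
`ben(M) = Σ_p (F_p(v_p M) - F_p(v_p N))`. The superchampion conditions say exactly that `F_p`
decreases strictly up to `v_p N` and weakly increases after it, so every summand is nonnegative
and `ben(M) ≥ F_p(v_p M) - F_p(v_p N)`. For `p ≥ √x₁`, the tangent line of `log` at `√x₁`
together with `ρ ≤ x₁` gives `ρ log p ≤ √x₁ p - x₁/2`; hence `F_p` is nondecreasing from `n = 1`
on, and if `v_p M ≥ 2` then `ben(M) ≥ F_p(2) - F_p(1) = p² - p - ρ log p ≥ x₁/2 - √x₁`.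
-/

open Real Finset

theorem apply_le_apply_of_succ_le_iff {α : Type*} [LinearOrder α] {f : ℕ → α} {v : ℕ}
    (h : ∀ i, i + 1 ≤ v ↔ f (i + 1) < f i) (n : ℕ) : f v ≤ f n := by
  rcases le_total v n with hvn | hnv
  · refine monotoneOn_nat_Ici_of_le_succ (fun i hi => not_lt.mp fun hlt => ?_)
      (Set.mem_ofPred.mpr le_rfl) hvn hvn
    have := (h i).mpr hlt
    omega
  · have hanti : Antitone fun i => f (min i v) := antitone_nat_of_succ_le fun i => by
      rcases lt_or_ge i v with hi | hi
      · rw [min_eq_left hi.le, min_eq_left hi]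
        exact ((h i).mp hi).le
      · rw [min_eq_right hi, min_eq_right (by omega)]
    simpa [hnv] using hanti hnv

theorem ell_prime_pow {p : ℕ} (hp : p.Prime) {n : ℕ} (hn : n ≠ 0) : ell (p ^ n) = p ^ n := by
  simp [ell, Nat.primeFactors_prime_pow hn hp, hp.factorization_self]

noncomputable def primePowerCost (ρ : ℝ) (p n : ℕ) : ℝ := ell (p ^ n) - ρ * n * log p

section primePowerCost

variable {ρ : ℝ} {p : ℕ}

@[simp]
theorem primePowerCost_zero : primePowerCost ρ p 0 = 0 := by
  simp [primePowerCost, ell]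

theorem primePowerCost_of_ne_zero (hp : p.Prime) {n : ℕ} (hn : n ≠ 0) :
    primePowerCost ρ p n = p ^ n - ρ * n * log p := by
  simp [primePowerCost, ell_prime_pow hp hn]

theorem ell_sub_mul_log_eq_sum (ρ : ℝ) {K : ℕ} {s : Finset ℕ} (hK : K.primeFactors ⊆ s) :
    (ell K : ℝ) - ρ * log K = ∑ q ∈ s, primePowerCost ρ q (K.factorization q) := by
  have hsupp : (ell K : ℝ) - ρ * log K = K.factorization.sum (primePowerCost ρ) := by
    rw [log_nat_eq_sum_factorization, Finsupp.mul_sum, ell]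
    simp only [Finsupp.sum, Nat.support_factorization]
    push_cast
    rw [← Finset.sum_sub_distrib]
    refine Finset.sum_congr rfl fun q hq => ?_
    rw [primePowerCost_of_ne_zero (Nat.prime_of_mem_primeFactors hq)
      (Finsupp.mem_support_iff.mp (by rwa [Nat.support_factorization]))]
    ring
  exact hsupp.trans <| Finsupp.sum_of_support_subset _ (by rwa [Nat.support_factorization]) _
    fun _ _ => primePowerCost_zero

theorem ben_eq_sum (ρ : ℝ) {N M : ℕ} {s : Finset ℕ} (hM : M.primeFactors ⊆ s)
    (hN : N.primeFactors ⊆ s) :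
    ben ρ N M = ∑ q ∈ s,
      (primePowerCost ρ q (M.factorization q) - primePowerCost ρ q (N.factorization q)) := by
  rw [Finset.sum_sub_distrib, ← ell_sub_mul_log_eq_sum ρ hM, ← ell_sub_mul_log_eq_sum ρ hN, ben]
  ring

theorem primePowerCost_sub_le_ben {N : ℕ}
    (hmin : ∀ q : ℕ, q.Prime → ∀ n, primePowerCost ρ q (N.factorization q) ≤ primePowerCost ρ q n)
    (M : ℕ) (hp : p.Prime) :
    primePowerCost ρ p (M.factorization p) - primePowerCost ρ p (N.factorization p) ≤
      ben ρ N M := by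
  have hprime : ∀ q ∈ insert p (M.primeFactors ∪ N.primeFactors), q.Prime := by
    simp only [mem_insert, mem_union]
    rintro q (rfl | hq | hq) <;> first | exact hp | exact Nat.prime_of_mem_primeFactors hq
  rw [ben_eq_sum ρ (subset_union_left.trans (subset_insert _ _))
    (subset_union_right.trans (subset_insert _ _))]
  exact single_le_sum (fun q hq => sub_nonneg.mpr (hmin q (hprime q hq) _)) (mem_insert_self _ _)

theorem primePowerCost_le_of_superchampion (hp : p.Prime) {v : ℕ}
    (h₁ : 1 ≤ v ↔ (p : ℝ) / log p < ρ)
    (h₂ : ∀ i : ℕ, 2 ≤ i → (i ≤ v ↔ ((p : ℝ) ^ i - (p : ℝ) ^ (i - 1)) / log p < ρ)) (n : ℕ) :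
    primePowerCost ρ p v ≤ primePowerCost ρ p n := by
  have hlog : 0 < log p := log_pos (by exact_mod_cast hp.one_lt)
  refine apply_le_apply_of_succ_le_iff (fun i => ?_) n
  rcases i with _ | i
  · rw [zero_add, h₁, div_lt_iff₀ hlog, primePowerCost_of_ne_zero hp one_ne_zero,
      primePowerCost_zero, pow_one, Nat.cast_one, mul_one]
    constructor <;> intro h <;> linarith
  · rw [h₂ (i + 2) (by omega), div_lt_iff₀ hlog, primePowerCost_of_ne_zero hp (by omega),
      primePowerCost_of_ne_zero hp (by omega), show i + 2 - 1 = i + 1 by omega]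
    push_cast
    constructor <;> intro h <;> linarith

theorem primePowerCost_monotoneOn (hp : p.Prime) (hρ : ρ * log p ≤ (p : ℝ) ^ 2 - p) :
    MonotoneOn (primePowerCost ρ p) (Set.Ici 1) := by
  refine monotoneOn_nat_Ici_of_le_succ fun i hi => ?_
  have hp1 : (1 : ℝ) ≤ p := by exact_mod_cast hp.one_lt.le
  have hpow : (p : ℝ) ≤ (p : ℝ) ^ i := le_self_pow₀ hp1 (by omega)
  rw [primePowerCost_of_ne_zero hp (by omega), primePowerCost_of_ne_zero hp (by omega), pow_succ]
  push_cast
  nlinarith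

end primePowerCost

theorem div_log_mul_log_le_of_sqrt_le {x y : ℝ} (hx : exp 1 ≤ x) (hy : √x ≤ y) :
    x / log x * log y ≤ √x * y - x / 2 := by
  have hx0 : 0 < x := (exp_pos 1).trans_le hx
  have hs : 0 < √x := sqrt_pos.mpr hx0
  have hss : √x * √x = x := mul_self_sqrt hx0.le
  have hL : 1 ≤ log x := by simpa using log_le_log (exp_pos 1) hx
  have htangent : log y ≤ log x / 2 + (y / √x - 1) := by
    have := log_le_sub_one_of_pos (div_pos (hs.trans_le hy) hs)
    rw [log_div (hs.trans_le hy).ne' hs.ne', log_sqrt hx0.le] at this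
    linarith
  have hxL : x / log x ≤ x := div_le_self hx0.le hL
  have hys : 0 ≤ y / √x - 1 := by rw [sub_nonneg, one_le_div hs]; exact hy
  calc x / log x * log y ≤ x / log x * (log x / 2) + x / log x * (y / √x - 1) := by
        rw [← mul_add]; exact mul_le_mul_of_nonneg_left htangent (by positivity)
    _ = x / 2 + x / log x * (y / √x - 1) := by field_simp
    _ ≤ x / 2 + x * (y / √x - 1) := by gcongr
    _ = √x * y - x / 2 := by field_simp; nlinarith

theorem small_benefit_large_primes_squarefree_general (ρ x₁ x₂ : ℝ)
    (hx₁e : Real.exp 1 ≤ x₁) (hx₁ : x₁ / Real.log x₁ = ρ)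
    (N : ℕ)
    (hNfac : ∀ p : ℕ, p.Prime →
      (1 ≤ N.factorization p ↔ (p : ℝ) / Real.log p < ρ) ∧
      (∀ i : ℕ, 2 ≤ i →
        (i ≤ N.factorization p ↔
          ((p : ℝ) ^ i - (p : ℝ) ^ (i - 1)) / Real.log p < ρ)))
    (M : ℕ)
    (hben : ben ρ N M < min (x₂ ^ 2 - 2 * x₂) (x₁ / 2 - Real.sqrt x₁)) :
    ∀ p : ℕ, p.Prime → Real.sqrt x₁ ≤ (p : ℝ) → M.factorization p ≤ 1 := by
  intro p hp hps
  by_contra! hk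
  have hp2 : (2 : ℝ) ≤ p := by exact_mod_cast hp.two_le
  have hss : √x₁ * √x₁ = x₁ := mul_self_sqrt ((exp_pos 1).le.trans hx₁e)
  have hkey : ρ * log p ≤ √x₁ * p - x₁ / 2 := hx₁ ▸ div_log_mul_log_le_of_sqrt_le hx₁e hps
  -- `p² - p - (√x₁ p - x₁/2)` equals both `((p - √x₁)² + p (p - 2)) / 2`
  -- and `(p - √x₁)(p - 1) + x₁/2 - √x₁`.
  have hgap_nonneg : ρ * log p ≤ (p : ℝ) ^ 2 - p := by nlinarith
  have hgap : x₁ / 2 - √x₁ ≤ (p : ℝ) ^ 2 - p - ρ * log p := by nlinarith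
  have hmin q (hq : q.Prime) :=
    primePowerCost_le_of_superchampion hq (hNfac q hq).1 (hNfac q hq).2
  have hcost : primePowerCost ρ p 2 - primePowerCost ρ p 1 = (p : ℝ) ^ 2 - p - ρ * log p := by
    rw [primePowerCost_of_ne_zero hp two_ne_zero, primePowerCost_of_ne_zero hp one_ne_zero]
    push_cast
    ring
  have hbound := calc x₁ / 2 - √x₁
      ≤ primePowerCost ρ p 2 - primePowerCost ρ p 1 := hcost ▸ hgap
    _ ≤ primePowerCost ρ p (M.factorization p) - primePowerCost ρ p (N.factorization p) :=
        sub_le_sub (primePowerCost_monotoneOn hp hgap_nonneg (Set.mem_Ici.mpr one_le_two)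
          (Set.mem_Ici.mpr (by omega)) hk) (hmin p hp 1)
    _ ≤ ben ρ N M := primePowerCost_sub_le_ben hmin M hp
  linarith [min_le_right (x₂ ^ 2 - 2 * x₂) (x₁ / 2 - √x₁)]

theorem small_benefit_large_primes_squarefree (ρ x₁ x₂ : ℝ)
    (hρ : 5 / Real.log 5 ≤ ρ)
    (hx₁e : Real.exp 1 ≤ x₁) (hx₁ : x₁ / Real.log x₁ = ρ)
    (hx₂1 : 1 < x₂) (hx₂ : (x₂ ^ 2 - x₂) / Real.log x₂ = ρ)
    (N : ℕ) (hN : 0 < N)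
    (hNfac : ∀ p : ℕ, p.Prime →
      (1 ≤ N.factorization p ↔ (p : ℝ) / Real.log p < ρ) ∧
      (∀ i : ℕ, 2 ≤ i →
        (i ≤ N.factorization p ↔
          ((p : ℝ) ^ i - (p : ℝ) ^ (i - 1)) / Real.log p < ρ)))
    (M : ℕ) (hM : 0 < M)
    (hben : ben ρ N M < min (x₂ ^ 2 - 2 * x₂) (x₁ / 2 - Real.sqrt x₁)) :
    ∀ p : ℕ, p.Prime → Real.sqrt x₁ ≤ (p : ℝ) → M.factorization p ≤ 1 :=
  small_benefit_large_primes_squarefree_general ρ x₁ x₂ hx₁e hx₁ N hNfac M hben
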